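/- arXiv:physics/0606137 — 3 statements merged into one kernel-verified Lean document; each statement's English description precedes it below -/
import Mathlib

section
/- For all α, β > 0, the squared L² distance ‖Ψ(α,·,x_c) − Ψ(β,·,x_c)‖² equals 2 − 2·2^{5/2} α^{5/4} β^{5/4}/(α+β)^{5/2}. -/
/-!
Each `Psi xc γ` is a centred Gaussian times `x - xc`, so `⟪Psi xc α x, Psi xc β x⟫` is a constant
times `‖x - xc‖² exp (-((α + β) / 2) ‖x - xc‖²)`. In polar coordinates the second Gaussian moment
is `∫ ‖v‖² exp (-b ‖v‖²) = n / (2 b) · (π / b) ^ (n / 2)` on an `n`-dimensional space (the Gamma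
factors of the radial integral and of the volume of the unit ball cancel). This gives the overlap
`∫ ⟪Psi xc α, Psi xc β⟫`, and `Psi xc γ` has norm one as the case `α = β`. Expanding
`‖Psi xc α - Psi xc β‖²` finishes the proof.
-/

open MeasureTheory Real Filter Topology

noncomputable def Psi (xc : EuclideanSpace ℝ (Fin 3)) (α : ℝ)
    (x : EuclideanSpace ℝ (Fin 3)) : EuclideanSpace ℝ (Fin 3) :=
  ((2 / 3 : ℝ) ^ ((1 : ℝ) / 2) * Real.pi ^ (-(3 : ℝ) / 4) * α ^ ((5 : ℝ) / 4) *
    Real.exp (-(α / 2) * ‖x - xc‖ ^ 2)) • (x - xc)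

lemma integrableOn_pow_mul_exp_neg_mul_sq {b : ℝ} (hb : 0 < b) (n : ℕ) :
    IntegrableOn (fun r : ℝ => r ^ n * exp (-b * r ^ 2)) (Set.Ioi 0) := by
  simpa only [rpow_natCast] using
    integrableOn_rpow_mul_exp_neg_mul_sq hb (s := n) (by linarith [n.cast_nonneg (α := ℝ)])

lemma integral_pow_mul_exp_neg_mul_sq {b : ℝ} (hb : 0 < b) (n : ℕ) :
    ∫ r in Set.Ioi (0 : ℝ), r ^ n * exp (-b * r ^ 2) =
      b ^ (-(n + 1 : ℝ) / 2) * (1 / 2) * Gamma ((n + 1) / 2) := by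
  rw [← integral_rpow_mul_exp_neg_mul_rpow two_pos (by linarith [n.cast_nonneg (α := ℝ)]) hb]
  refine setIntegral_congr_fun measurableSet_Ioi fun r _ => ?_
  simp only [rpow_natCast, rpow_two]

lemma pow_sub_one_smul_sq_mul {n : ℕ} (hn : 1 ≤ n) (r c : ℝ) :
    r ^ (n - 1) • (r ^ 2 * c) = r ^ (n + 1) * c := by
  rw [smul_eq_mul, ← mul_assoc, ← pow_add]
  congr 2
  omega

section SecondMoment

open Module

variable {E : Type*} [NormedAddCommGroup E] [InnerProductSpace ℝ E] [FiniteDimensional ℝ E]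
  [MeasurableSpace E] [BorelSpace E] [Nontrivial E]

lemma integrable_norm_sq_mul_exp_neg_mul_norm_sq {b : ℝ} (hb : 0 < b) :
    Integrable fun v : E => ‖v‖ ^ 2 * exp (-b * ‖v‖ ^ 2) := by
  rw [integrable_fun_norm_addHaar volume (f := fun r => r ^ 2 * exp (-b * r ^ 2))]
  simp only [pow_sub_one_smul_sq_mul finrank_pos]
  exact integrableOn_pow_mul_exp_neg_mul_sq hb _

lemma integral_norm_sq_mul_exp_neg_mul_norm_sq {b : ℝ} (hb : 0 < b) :
    ∫ v : E, ‖v‖ ^ 2 * exp (-b * ‖v‖ ^ 2) =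
      finrank ℝ E / 2 / b * (π / b) ^ (finrank ℝ E / 2 : ℝ) := by
  have hΓ : Gamma (finrank ℝ E / 2 + 1) ≠ 0 := (Gamma_pos_of_pos (by positivity)).ne'
  rw [integral_fun_norm_addHaar volume (fun r => r ^ 2 * exp (-b * r ^ 2))]
  simp only [pow_sub_one_smul_sq_mul finrank_pos, nsmul_eq_mul, smul_eq_mul]
  rw [integral_pow_mul_exp_neg_mul_sq hb, measureReal_def, InnerProductSpace.volume_ball,
    ENNReal.ofReal_one, one_pow, one_mul, ENNReal.toReal_ofReal (by positivity),
    sqrt_eq_rpow, ← rpow_natCast, ← rpow_mul pi_pos.le, div_rpow pi_pos.le hb.le]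
  push_cast
  rw [show ((finrank ℝ E : ℝ) + 1 + 1) / 2 = finrank ℝ E / 2 + 1 by ring,
    show -((finrank ℝ E : ℝ) + 1 + 1) / 2 = -(finrank ℝ E / 2 + 1) by ring,
    rpow_neg hb.le, rpow_add_one hb.ne', show (1 / 2 : ℝ) * finrank ℝ E = finrank ℝ E / 2 by ring]
  field_simp

end SecondMoment

section Psi

open scoped InnerProductSpace

variable (xc : EuclideanSpace ℝ (Fin 3)) {α β : ℝ}

lemma inner_Psi_Psi (x : EuclideanSpace ℝ (Fin 3)) :
    ⟪Psi xc α x, Psi xc β x⟫_ℝ = 2 / 3 * π ^ (-(3 / 2 : ℝ)) * α ^ ((5 : ℝ) / 4) *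
      β ^ ((5 : ℝ) / 4) * (‖x - xc‖ ^ 2 * exp (-((α + β) / 2) * ‖x - xc‖ ^ 2)) := by
  have h23 : (2 / 3 : ℝ) ^ ((1 : ℝ) / 2) * (2 / 3 : ℝ) ^ ((1 : ℝ) / 2) = 2 / 3 := by
    rw [← rpow_add (by norm_num)]; norm_num
  have hπ : π ^ (-(3 : ℝ) / 4) * π ^ (-(3 : ℝ) / 4) = π ^ (-(3 / 2 : ℝ)) := by
    rw [← rpow_add pi_pos]; norm_num
  have hexp : exp (-(α / 2) * ‖x - xc‖ ^ 2) * exp (-(β / 2) * ‖x - xc‖ ^ 2) =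
      exp (-((α + β) / 2) * ‖x - xc‖ ^ 2) := by
    rw [← exp_add]; ring_nf
  rw [← h23, ← hπ, ← hexp]
  simp only [Psi, real_inner_smul_left, real_inner_smul_right, real_inner_self_eq_norm_sq]
  ring

lemma integrable_inner_Psi (hαβ : 0 < α + β) :
    Integrable fun x => ⟪Psi xc α x, Psi xc β x⟫_ℝ := by
  simp_rw [inner_Psi_Psi]
  exact ((integrable_norm_sq_mul_exp_neg_mul_norm_sq (by positivity)).comp_sub_right xc).const_mul _

lemma integral_inner_Psi (hαβ : 0 < α + β) :
    ∫ x, ⟪Psi xc α x, Psi xc β x⟫_ℝ =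
      2 ^ ((5 : ℝ) / 2) * α ^ ((5 : ℝ) / 4) * β ^ ((5 : ℝ) / 4) / (α + β) ^ ((5 : ℝ) / 2) := by
  have hπ : π ^ (3 / 2 : ℝ) ≠ 0 := by positivity
  simp_rw [inner_Psi_Psi]
  rw [integral_const_mul,
    integral_sub_right_eq_self (fun x => ‖x‖ ^ 2 * exp (-((α + β) / 2) * ‖x‖ ^ 2)) xc,
    integral_norm_sq_mul_exp_neg_mul_norm_sq (by positivity), finrank_euclideanSpace_fin]
  push_cast
  rw [div_rpow pi_pos.le (by positivity), div_rpow hαβ.le zero_le_two, rpow_neg pi_pos.le,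
    show (5 / 2 : ℝ) = 3 / 2 + 1 by norm_num, rpow_add_one two_ne_zero, rpow_add_one hαβ.ne']
  field_simp

lemma integral_norm_Psi_sq (hα : 0 < α) : ∫ x, ‖Psi xc α x‖ ^ 2 = 1 := by
  simp_rw [← real_inner_self_eq_norm_sq]
  rw [integral_inner_Psi xc (by positivity), ← two_mul, mul_rpow zero_le_two hα.le,
    mul_assoc, ← rpow_add hα]
  norm_num
  exact (rpow_pos_of_pos hα _).ne'

lemma integrable_norm_Psi_sq (hα : 0 < α) : Integrable fun x => ‖Psi xc α x‖ ^ 2 := by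
  simpa only [real_inner_self_eq_norm_sq] using integrable_inner_Psi xc (add_pos hα hα)

end Psi

theorem psi_l2_distance_sq (xc : EuclideanSpace ℝ (Fin 3)) (α β : ℝ) (hα : 0 < α) (hβ : 0 < β) :
    ∫ x : EuclideanSpace ℝ (Fin 3), ‖Psi xc α x - Psi xc β x‖ ^ 2 =
      2 - 2 * ((2 : ℝ) ^ ((5 : ℝ) / 2) * α ^ ((5 : ℝ) / 4) * β ^ ((5 : ℝ) / 4) /
        (α + β) ^ ((5 : ℝ) / 2)) := by
  have hinner := (integrable_inner_Psi xc (add_pos hα hβ)).const_mul 2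
  simp_rw [norm_sub_sq_real]
  rw [integral_add ?_ (integrable_norm_Psi_sq xc hβ),
    integral_sub (integrable_norm_Psi_sq xc hα) hinner, integral_const_mul,
    integral_norm_Psi_sq xc hα, integral_norm_Psi_sq xc hβ, integral_inner_Psi xc (add_pos hα hβ)]
  · ring
  · exact (integrable_norm_Psi_sq xc hα).sub hinner
end

section
/- The three-dimensional Fourier transform of Ψ(α,·,x_c) equals −i (2/3)^{1/2} π^{-3/4} α^{-5/4} k exp(−|k|²/(2α) − i k·x_c). -/
open MeasureTheory Real Filter Topology

lemma gauss_hasDerivAt (b c : ℝ) (x : ℝ) :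
    HasDerivAt (fun t : ℝ => Complex.exp (-(b:ℂ)*t^2 + (c*Complex.I)*t))
      ((-2*(b:ℂ)*x + c*Complex.I) * Complex.exp (-(b:ℂ)*x^2 + (c*Complex.I)*x)) x := by
  have h1 : HasDerivAt (fun z : ℂ => Complex.exp (-(b:ℂ)*z^2 + (c*Complex.I)*z))
      ((-2*(b:ℂ)*x + c*Complex.I) * Complex.exp (-(b:ℂ)*(x:ℂ)^2 + (c*Complex.I)*x)) (x:ℂ) := by
    have hp : HasDerivAt (fun z : ℂ => -(b:ℂ)*z^2 + (c*Complex.I)*z)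
        (-2*(b:ℂ)*x + c*Complex.I) (x:ℂ) := by
      have := ((hasDerivAt_pow 2 (x:ℂ)).const_mul (-(b:ℂ))).add
        ((hasDerivAt_id (x:ℂ)).const_mul ((c:ℂ)*Complex.I))
      refine this.congr_deriv ?_
      ring
    simpa [mul_comm] using hp.cexp
  exact h1.comp_ofReal

lemma integrable_gauss (b c : ℝ) (hb : 0 < b) :
    Integrable (fun t : ℝ => Complex.exp (-(b:ℂ)*t^2 + (c*Complex.I)*t)) := by
  simpa using integrable_cexp_quadratic (b := (b:ℂ)) (by simpa using hb) ((c:ℂ)*Complex.I) 0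

lemma integrable_mul_gauss (b c : ℝ) (hb : 0 < b) :
    Integrable (fun t : ℝ => (t:ℂ) * Complex.exp (-(b:ℂ)*t^2 + (c*Complex.I)*t)) := by
  have hbound : Integrable (fun t : ℝ => ‖t * Real.exp (-b * t^2)‖) :=
    (integrable_rpow_mul_exp_neg_mul_sq hb (s := 1) (by norm_num)).norm.congr
      (by filter_upwards with t; rw [Real.rpow_one])
  refine Integrable.mono' hbound ?_ ?_
  · apply Continuous.aestronglyMeasurable; continuity
  · filter_upwards with t
    have hre : (-(b:ℂ)*t^2 + ((c:ℂ)*Complex.I)*t).re = -b*t^2 := by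
      simp [← Complex.ofReal_pow]
    rw [norm_mul, Complex.norm_exp, hre,
      Complex.norm_real, Real.norm_eq_abs, Real.norm_eq_abs, abs_mul, Real.abs_exp]

lemma integral_deriv_gauss_zero (b c : ℝ) (hb : 0 < b) :
    ∫ x : ℝ, (-2*(b:ℂ)*x + c*Complex.I) * Complex.exp (-(b:ℂ)*x^2 + (c*Complex.I)*x) = 0 := by
  set g : ℝ → ℂ := fun t => Complex.exp (-(b:ℂ)*t^2 + (c*Complex.I)*t) with hg
  set h : ℝ → ℂ := fun t => (-2*(b:ℂ)*t + c*Complex.I) * g t with hh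
  have hint : Integrable h := by
    have : h = fun t : ℝ => (-2*(b:ℂ)) * ((t:ℂ) * g t) + (c*Complex.I) * g t := by
      funext t; simp only [hh, hg]; ring
    rw [this]
    exact ((integrable_mul_gauss b c hb).const_mul _).add ((integrable_gauss b c hb).const_mul _)
  have key : ∀ T : ℝ, ∫ x in (-T)..T, h x = g T - g (-T) := by
    intro T
    refine intervalIntegral.integral_eq_sub_of_hasDerivAt (fun x _ => gauss_hasDerivAt b c x) ?_
    exact (Continuous.intervalIntegrable (by continuity) _ _)
  have hlim : Tendsto (fun T : ℝ => g T - g (-T)) atTop (nhds 0) := by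
    have hnorm : ∀ T : ℝ, ‖g T‖ = Real.exp (-b*T^2) := by
      intro T
      rw [hg]
      simp only [Complex.norm_exp]
      congr 1
      simp [← Complex.ofReal_pow]
    have h1 : Tendsto (fun T : ℝ => g T) atTop (nhds 0) := by
      rw [tendsto_zero_iff_norm_tendsto_zero]
      simp_rw [hnorm]
      refine Real.tendsto_exp_atBot.comp ?_
      have hsq : Tendsto (fun x:ℝ => b*x^2) atTop atTop :=
        (tendsto_pow_atTop two_ne_zero).const_mul_atTop hb
      simp_rw [neg_mul]
      exact tendsto_neg_atBot_iff.mpr hsq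
    have h2 : Tendsto (fun T : ℝ => g (-T)) atTop (nhds 0) := by
      rw [tendsto_zero_iff_norm_tendsto_zero]
      have : ∀ T:ℝ, ‖g (-T)‖ = Real.exp (-b*T^2) := by
        intro T; rw [hnorm]; ring_nf
      simp_rw [this]
      refine Real.tendsto_exp_atBot.comp ?_
      have hsq : Tendsto (fun x:ℝ => b*x^2) atTop atTop :=
        (tendsto_pow_atTop two_ne_zero).const_mul_atTop hb
      simp_rw [neg_mul]
      exact tendsto_neg_atBot_iff.mpr hsq
    simpa using h1.sub h2
  have := intervalIntegral_tendsto_integral hint tendsto_neg_atTop_atBot tendsto_id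
  simp only [id] at this
  refine tendsto_nhds_unique this ?_
  simpa only [key] using hlim

lemma integral_gauss_value (b c : ℝ) (hb : 0 < b) :
    ∫ x : ℝ, Complex.exp (-(b:ℂ)*x^2 + (c*Complex.I)*x)
      = (((Real.pi/b)^((1:ℝ)/2) : ℝ) : ℂ) * Complex.exp (-((c^2/(4*b) : ℝ) : ℂ)) := by
  have h := integral_cexp_quadratic (b := -(b:ℂ)) (by simpa using hb) ((c:ℂ)*Complex.I) 0
  simp only [add_zero, neg_neg] at h
  rw [h]
  congr 1
  · rw [Complex.ofReal_cpow (by positivity)]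
    norm_num
  · congr 1
    have h2 : ((c:ℂ)*Complex.I)^2 = -(c:ℂ)^2 := by
      rw [mul_pow, Complex.I_sq]; ring
    rw [h2]
    push_cast
    have : (b:ℂ) ≠ 0 := by exact_mod_cast hb.ne'
    field_simp
    ring

lemma integral_mul_gauss_eq (b c : ℝ) (hb : 0 < b) :
    ∫ x : ℝ, (x:ℂ) * Complex.exp (-(b:ℂ)*x^2 + (c*Complex.I)*x)
      = (c*Complex.I/(2*b)) * ∫ x : ℝ, Complex.exp (-(b:ℂ)*x^2 + (c*Complex.I)*x) := by
  have hb' : (2*(b:ℂ)) ≠ 0 := by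
    simp only [ne_eq, mul_eq_zero]
    push_neg
    exact ⟨by norm_num, by exact_mod_cast hb.ne'⟩
  have key : ∀ x : ℝ, (x:ℂ) * Complex.exp (-(b:ℂ)*x^2 + (c*Complex.I)*x)
      = (2*(b:ℂ))⁻¹ * (((c:ℂ)*Complex.I) * Complex.exp (-(b:ℂ)*x^2 + (c*Complex.I)*x)
        - (-2*(b:ℂ)*x + c*Complex.I) * Complex.exp (-(b:ℂ)*x^2 + (c*Complex.I)*x)) := by
    intro x
    have : (b:ℂ) ≠ 0 := by exact_mod_cast hb.ne'
    field_simp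
    ring
  simp_rw [key]
  rw [MeasureTheory.integral_const_mul, integral_sub ((integrable_gauss b c hb).const_mul _)
    (by
      have : (fun x : ℝ => (-2*(b:ℂ)*x + c*Complex.I) * Complex.exp (-(b:ℂ)*x^2 + (c*Complex.I)*x))
          = fun x : ℝ => (-2*(b:ℂ)) * ((x:ℂ) * Complex.exp (-(b:ℂ)*x^2 + (c*Complex.I)*x))
            + (c*Complex.I) * Complex.exp (-(b:ℂ)*x^2 + (c*Complex.I)*x) := by
        funext x; ring
      rw [this]
      exact ((integrable_mul_gauss b c hb).const_mul _).add ((integrable_gauss b c hb).const_mul _)),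
    integral_deriv_gauss_zero b c hb, sub_zero, MeasureTheory.integral_const_mul]
  rw [← mul_assoc]
  congr 1
  field_simp

theorem psi_fourier_transform (xc k : EuclideanSpace ℝ (Fin 3)) (α : ℝ) (hα : 0 < α)
    (i : Fin 3) :
    (((2 * Real.pi) ^ (-(3 : ℝ) / 2) : ℝ) : ℂ) *
        ∫ x : EuclideanSpace ℝ (Fin 3),
          ((Psi xc α x i : ℝ) : ℂ) * Complex.exp (-Complex.I * ((inner ℝ k x : ℝ) : ℂ)) =
      -Complex.I *
        (((2 / 3 : ℝ) ^ ((1 : ℝ) / 2) * Real.pi ^ (-(3 : ℝ) / 4) * α ^ (-(5 : ℝ) / 4) : ℝ) : ℂ) *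
        ((k i : ℝ) : ℂ) *
        Complex.exp (-((‖k‖ ^ 2 / (2 * α) : ℝ) : ℂ) - Complex.I * ((inner ℝ k xc : ℝ) : ℂ)) := by
  set C : ℝ := (2 / 3 : ℝ) ^ ((1 : ℝ) / 2) * Real.pi ^ (-(3 : ℝ) / 4) * α ^ ((5 : ℝ) / 4) with hC
  set F : EuclideanSpace ℝ (Fin 3) → ℂ := fun x =>
    ((Psi xc α x i : ℝ) : ℂ) * Complex.exp (-Complex.I * ((inner ℝ k x : ℝ) : ℂ)) with hF
  -- translation
  have step1 : ∫ x, F x = ∫ y, F (y + xc) := (integral_add_right_eq_self F xc).symm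
  -- pointwise form after translation
  set G : EuclideanSpace ℝ (Fin 3) → ℂ := fun y =>
    (C : ℂ) * (y i : ℂ) * Complex.exp (-((α/2 : ℝ):ℂ) * (‖y‖^2 : ℝ)
      + ((-(inner ℝ k y : ℝ) : ℝ):ℂ) * Complex.I) with hG
  have step2 : ∀ y, F (y + xc) = Complex.exp (-Complex.I * ((inner ℝ k xc : ℝ) : ℂ)) * G y := by
    intro y
    have h1 : y + xc - xc = y := by abel
    have h2 : (inner ℝ k (y + xc) : ℝ) = (inner ℝ k y : ℝ) + (inner ℝ k xc : ℝ) := inner_add_right k y xc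
    simp only [hF, hG, Psi, h1, PiLp.smul_apply, smul_eq_mul, h2]
    rw [← hC]
    push_cast
    have merge : ∀ (z w u v : ℂ), z * Complex.exp u * w * Complex.exp v
        = z * w * Complex.exp (u + v) := by
      intros z w u v; rw [Complex.exp_add]; ring
    have merge2 : ∀ (z w u v : ℂ), Complex.exp u * (z * w * Complex.exp v)
        = z * w * Complex.exp (u + v) := by
      intros z w u v; rw [Complex.exp_add]; ring
    rw [merge, merge2]
    congr 1
    ring
  set f : Fin 3 → ℝ → ℂ := fun j t =>
    (if j = i then (C:ℂ) * (t:ℂ) else 1) *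
      Complex.exp (-((α/2 : ℝ):ℂ) * t^2 + ((-(k j) : ℝ):ℂ) * Complex.I * t) with hf
  have step3 : ∫ y, G y = ∫ v : Fin 3 → ℝ, ∏ j, f j (v j) := by
    have hm : MeasurePreserving (MeasurableEquiv.toLp 2 (Fin 3 → ℝ)) :=
      (EuclideanSpace.volume_preserving_symm_measurableEquiv_toLp (Fin 3)).symm
    rw [← hm.integral_comp (MeasurableEquiv.measurableEmbedding _)]
    congr 1
    funext v
    have happ : ∀ j, MeasurableEquiv.toLp 2 (Fin 3 → ℝ) v j = v j := fun j => rfl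
    have hnorm : (‖MeasurableEquiv.toLp 2 (Fin 3 → ℝ) v‖ : ℝ)^2 = ∑ j, (v j)^2 := by
      rw [EuclideanSpace.norm_eq, Real.sq_sqrt (Finset.sum_nonneg fun j _ => sq_nonneg _)]
      simp [happ]
    have hinner : (inner ℝ k (MeasurableEquiv.toLp 2 (Fin 3 → ℝ) v) : ℝ)
        = ∑ j, (k j) * (v j) := by
      rw [PiLp.inner_apply]
      simp [happ, RCLike.inner_apply]
      exact Finset.sum_congr rfl fun j _ => mul_comm _ _
    simp only [Function.comp_apply, hG, happ, hnorm, hinner]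
    rw [hf]
    simp only []
    rw [Finset.prod_mul_distrib, Finset.prod_ite_eq', ← Complex.exp_sum]
    simp only [Finset.mem_univ, if_true]
    congr 1
    push_cast
    rw [Finset.sum_add_distrib, Finset.mul_sum]
    congr 1
    rw [← Finset.sum_neg_distrib, Finset.sum_mul]
    congr 1
    exact Finset.sum_congr rfl fun x _ => by ring
  have step4 : ∫ v : Fin 3 → ℝ, ∏ j, f j (v j) = ∏ j, ∫ t, f j t :=
    MeasureTheory.integral_fintype_prod_eq_prod f
  set A : Fin 3 → ℂ := fun j => (((Real.pi/(α/2))^((1:ℝ)/2) : ℝ) : ℂ) *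
    Complex.exp (-(((-(k j))^2/(4*(α/2)) : ℝ) : ℂ)) with hA
  have hb : 0 < α/2 := by linarith
  have hval : ∀ j, ∫ t : ℝ, f j t
      = (if j = i then (C:ℂ) * (-((k i : ℝ):ℂ)) * Complex.I/((α:ℝ):ℂ) else 1) * A j := by
    intro j
    by_cases hj : j = i
    · subst hj
      have hfun : ∀ t : ℝ, f j t = (C:ℂ) * ((t:ℂ) * Complex.exp (-((α/2 : ℝ):ℂ) * t^2
          + ((-(k j) : ℝ):ℂ) * Complex.I * t)) := by
        intro t
        simp only [hf, if_true]
        ring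
      simp_rw [hfun]
      rw [MeasureTheory.integral_const_mul, integral_mul_gauss_eq (α/2) (-(k j)) hb,
        integral_gauss_value (α/2) (-(k j)) hb]
      rw [hA]
      have h2 : (2 * ((α/2 : ℝ):ℂ)) = ((α:ℝ):ℂ) := by push_cast; ring
      rw [h2]
      push_cast
      ring
    · simp only [hf, if_neg hj, one_mul]
      rw [integral_gauss_value (α/2) (-(k j)) hb, hA]
  have hprod : ∏ j, ∫ t : ℝ, f j t
      = (C:ℂ) * (-((k i : ℝ):ℂ)) * Complex.I/((α:ℝ):ℂ) *
        ((((Real.pi/(α/2))^((1:ℝ)/2) : ℝ)^(3:ℕ) : ℝ) : ℂ) *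
        Complex.exp (-((‖k‖^2/(2*α) : ℝ):ℂ)) := by
    rw [Finset.prod_congr rfl (fun j _ => hval j), Finset.prod_mul_distrib,
      Finset.prod_ite_eq', if_pos (Finset.mem_univ i)]
    rw [hA]
    rw [Finset.prod_mul_distrib, Finset.prod_const, ← Complex.exp_sum]
    have hcard : (Finset.univ : Finset (Fin 3)).card = 3 := by simp
    rw [hcard, ← mul_assoc]
    congr 2
    · push_cast; ring
    · have hnk : ‖k‖^2 = ∑ j, (k j)^2 := by
        rw [EuclideanSpace.norm_eq, Real.sq_sqrt (by positivity)]
        simp [_root_.sq_abs]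
      rw [hnk]
      push_cast
      rw [Finset.sum_div, ← Finset.sum_neg_distrib]
      exact Finset.sum_congr rfl fun j _ => by
        have h0 : (α:ℂ) ≠ 0 := by exact_mod_cast hα.ne'
        field_simp
        ring
  -- real scalar identity
  have h2pi : (0:ℝ) < 2*Real.pi := by positivity
  have hkey : (2*Real.pi)^(-(3:ℝ)/2) * (C/α) * (((Real.pi/(α/2))^((1:ℝ)/2))^(3:ℕ))
      = (2/3:ℝ)^((1:ℝ)/2) * Real.pi^(-(3:ℝ)/4) * α^(-(5:ℝ)/4) := by
    have h1 : Real.pi/(α/2) = 2*Real.pi/α := by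
      field_simp
    rw [h1, ← Real.rpow_natCast ((2*Real.pi/α)^((1:ℝ)/2)) 3, ← Real.rpow_mul (by positivity)]
    rw [show ((1:ℝ)/2 * ((3:ℕ):ℝ)) = (3:ℝ)/2 by norm_num]
    rw [Real.div_rpow h2pi.le hα.le, hC]
    have e1 : (2*Real.pi)^(-(3:ℝ)/2) * (2*Real.pi)^((3:ℝ)/2) = 1 := by
      rw [← Real.rpow_add h2pi]
      norm_num
    have e2 : α^((5:ℝ)/4) * α⁻¹ * (α^((3:ℝ)/2))⁻¹ = α^(-(5:ℝ)/4) := by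
      rw [← Real.rpow_neg_one α, ← Real.rpow_neg hα.le, ← Real.rpow_add hα,
        ← Real.rpow_add hα]
      norm_num
    linear_combination ((2/3:ℝ)^((1:ℝ)/2) * Real.pi^(-(3:ℝ)/4)
        * (α^((5:ℝ)/4) * α⁻¹ * (α^((3:ℝ)/2))⁻¹)) * e1
      + ((2/3:ℝ)^((1:ℝ)/2) * Real.pi^(-(3:ℝ)/4)) * e2
  have hkeyC : (((2*Real.pi)^(-(3:ℝ)/2) : ℝ) : ℂ) * ((C:ℂ)/((α:ℝ):ℂ))
        * ((((Real.pi/(α/2))^((1:ℝ)/2) : ℝ)^(3:ℕ) : ℂ))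
      = (((2/3:ℝ)^((1:ℝ)/2) * Real.pi^(-(3:ℝ)/4) * α^(-(5:ℝ)/4) : ℝ) : ℂ) := by
    rw [← hkey]
    push_cast
    ring
  -- assemble
  rw [show (-((‖k‖^2/(2*α) : ℝ):ℂ) - Complex.I * ((inner ℝ k xc : ℝ):ℂ))
      = (-((‖k‖^2/(2*α) : ℝ):ℂ)) + (-Complex.I * ((inner ℝ k xc : ℝ):ℂ)) from by ring,
    Complex.exp_add]
  rw [step1]
  simp_rw [step2]
  rw [MeasureTheory.integral_const_mul, step3, step4, hprod]
  push_cast at hkeyC ⊢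
  linear_combination (-Complex.I * ((k i : ℝ):ℂ)
      * Complex.exp (-Complex.I * ((inner ℝ k xc : ℝ):ℂ))
      * Complex.exp (-(((‖k‖:ℝ):ℂ)^2/(2*((α:ℝ):ℂ))))) * hkeyC
end

section
/- Let ε_r : ℝ³ → ℂ be Hölder-continuous and bounded, D ⊂ ℝ³ bounded with x_c ∈ interior of D, and λ = ε_r(x_c). Then lim_{α→∞} ‖(ε_r(·) − λ) Ψ(α,·,x_c)‖²_{L²(D)} = 0. -/
/-
Hölder continuity with exponent s gives |ε(x) − ε(x_c)|² ≤ C²|x − x_c|^{2s}, so the integrand is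
dominated on all of ℝ³ by a constant times α^{5/2}|x − x_c|^{2s+2} e^{−α|x − x_c|²}. The
substitution x − x_c = α^{−1/2} y turns the integral of this Gaussian moment into
α^{5/2} · α^{−(2s+5)/2} = α^{−s} times a fixed (finite) integral, which tends to 0.
-/

open MeasureTheory Real Filter Topology

open Module
open scoped NNReal

section GaussianMoments

variable {E : Type*} [NormedAddCommGroup E] [NormedSpace ℝ E] [FiniteDimensional ℝ E]
  [MeasurableSpace E] [BorelSpace E] (μ : Measure E) [μ.IsAddHaarMeasure]

theorem integrable_norm_rpow_mul_exp_neg_mul_sq [Nontrivial E] {b p : ℝ} (hb : 0 < b)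
    (hp : -(finrank ℝ E : ℝ) < p) :
    Integrable (fun x : E => ‖x‖ ^ p * exp (-b * ‖x‖ ^ 2)) μ := by
  rw [integrable_fun_norm_addHaar μ (f := fun r => r ^ p * exp (-b * r ^ 2))]
  have hdim : (finrank ℝ E : ℝ) ≤ ((finrank ℝ E - 1 : ℕ) : ℝ) + 1 := by
    exact_mod_cast le_tsub_add
  refine (integrableOn_rpow_mul_exp_neg_mul_sq hb (s := (finrank ℝ E - 1 : ℕ) + p)
    (by linarith)).congr_fun (fun r (hr : 0 < r) => ?_) measurableSet_Ioi
  simp only [smul_eq_mul]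
  rw [rpow_add hr, rpow_natCast, mul_assoc]

theorem integral_norm_rpow_mul_exp_neg_mul_sq {b : ℝ} (hb : 0 < b) (p : ℝ) :
    ∫ x, ‖x‖ ^ p * exp (-b * ‖x‖ ^ 2) ∂μ =
      b ^ (-(p + finrank ℝ E) / 2) * ∫ x, ‖x‖ ^ p * exp (-‖x‖ ^ 2) ∂μ := by
  have hsb : 0 < √b := sqrt_pos.2 hb
  have hchange := Measure.integral_comp_inv_smul_of_nonneg μ
    (fun x => ‖x‖ ^ p * exp (-b * ‖x‖ ^ 2)) hsb.le
  have hscale : ∀ x : E, ‖(√b)⁻¹ • x‖ ^ p * exp (-b * ‖(√b)⁻¹ • x‖ ^ 2) =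
      b ^ (-p / 2) * (‖x‖ ^ p * exp (-‖x‖ ^ 2)) := by
    intro x
    have hexp : -b * ((√b)⁻¹ * ‖x‖) ^ 2 = -‖x‖ ^ 2 := by
      rw [mul_pow, inv_pow, sq_sqrt hb.le]; field_simp
    have hpow : (√b)⁻¹ ^ p = b ^ (-p / 2) := by
      rw [Real.sqrt_eq_rpow, ← rpow_neg_one, ← rpow_mul hb.le, ← rpow_mul hb.le]; ring_nf
    rw [norm_smul, norm_inv, norm_of_nonneg hsb.le, hexp, mul_rpow (by positivity) (norm_nonneg _),
      hpow, mul_assoc]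
  simp only [hscale, integral_const_mul, smul_eq_mul] at hchange
  rw [Real.sqrt_eq_rpow, ← rpow_natCast, ← rpow_mul hb.le] at hchange
  rw [show -(p + finrank ℝ E) / 2 = -p / 2 - 1 / 2 * finrank ℝ E by ring, rpow_sub hb,
    div_mul_eq_mul_div, hchange]
  field_simp

theorem HolderWith.setIntegral_norm_sub_sq_mul_gaussian_le [Nontrivial E] {F : Type*}
    [SeminormedAddCommGroup F] {f : E → F} {C s : ℝ≥0} (hf : HolderWith C s f) {α : ℝ}
    (hα : 0 < α) (D : Set E) (x₀ : E) :
    ∫ x in D, ‖f x - f x₀‖ ^ 2 * (‖x - x₀‖ ^ 2 * exp (-α * ‖x - x₀‖ ^ 2)) ∂μ ≤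
      C ^ 2 * α ^ (-(2 * (s : ℝ) + 2 + finrank ℝ E) / 2) *
        ∫ x, ‖x‖ ^ (2 * (s : ℝ) + 2) * exp (-‖x‖ ^ 2) ∂μ := by
  set g : E → ℝ := fun x => C ^ 2 * (‖x - x₀‖ ^ (2 * (s : ℝ) + 2) * exp (-α * ‖x - x₀‖ ^ 2))
  have hg : Integrable g μ :=
    ((integrable_norm_rpow_mul_exp_neg_mul_sq μ hα (by
      linarith [s.2, (finrank ℝ E).cast_nonneg (α := ℝ)])).comp_sub_right x₀).const_mul _
  have hg_nonneg : 0 ≤ g := fun x => by positivity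
  have hle : ∀ x, ‖f x - f x₀‖ ^ 2 * (‖x - x₀‖ ^ 2 * exp (-α * ‖x - x₀‖ ^ 2)) ≤ g x := by
    intro x
    have hholder : ‖f x - f x₀‖ ≤ C * ‖x - x₀‖ ^ (s : ℝ) := by
      simpa only [dist_eq_norm] using hf.dist_le x x₀
    calc ‖f x - f x₀‖ ^ 2 * (‖x - x₀‖ ^ 2 * exp (-α * ‖x - x₀‖ ^ 2))
        ≤ (C * ‖x - x₀‖ ^ (s : ℝ)) ^ 2 * (‖x - x₀‖ ^ 2 * exp (-α * ‖x - x₀‖ ^ 2)) := by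
          gcongr
      _ = g x := by
          simp only [g]
          rw [rpow_add' (norm_nonneg _) (by positivity), mul_comm (2 : ℝ),
            rpow_mul (norm_nonneg _)]
          simp only [rpow_two]
          ring
  calc ∫ x in D, ‖f x - f x₀‖ ^ 2 * (‖x - x₀‖ ^ 2 * exp (-α * ‖x - x₀‖ ^ 2)) ∂μ
      ≤ ∫ x in D, g x ∂μ :=
        integral_mono_of_nonneg (ae_of_all _ fun x => by positivity) hg.integrableOn
          (ae_of_all _ hle)
    _ ≤ ∫ x, g x ∂μ := setIntegral_le_integral hg (ae_of_all _ hg_nonneg)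
    _ = _ := by
        rw [integral_const_mul, integral_sub_right_eq_self
          (fun y => ‖y‖ ^ (2 * (s : ℝ) + 2) * exp (-α * ‖y‖ ^ 2)) x₀,
          integral_norm_rpow_mul_exp_neg_mul_sq μ hα, mul_assoc]

end GaussianMoments

theorem norm_Psi_sq {α : ℝ} (hα : 0 ≤ α) (xc x : EuclideanSpace ℝ (Fin 3)) :
    ‖Psi xc α x‖ ^ 2 = 2 / 3 * π ^ (-(3 / 2 : ℝ)) * α ^ (5 / 2 : ℝ) *
      (‖x - xc‖ ^ 2 * exp (-α * ‖x - xc‖ ^ 2)) := by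
  have hsq : ∀ {a : ℝ} (y : ℝ), 0 ≤ a → (a ^ y) ^ 2 = a ^ (y * 2) := fun y ha => by
    rw [rpow_mul ha, rpow_two]
  rw [Psi, norm_smul, norm_of_nonneg (by positivity), mul_pow, mul_pow, mul_pow, mul_pow,
    hsq _ (by norm_num), hsq _ pi_pos.le, hsq _ hα, ← exp_nat_mul]
  norm_num
  ring_nf

theorem essential_spectrum_first_term_vanishes_general
    (eps : EuclideanSpace ℝ (Fin 3) → ℂ)
    (hHolder : ∃ (C s : NNReal), 0 < s ∧ s ≤ 1 ∧ HolderWith C s eps)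
    (D : Set (EuclideanSpace ℝ (Fin 3)))
    (xc : EuclideanSpace ℝ (Fin 3)) :
    Tendsto (fun α : ℝ =>
        ∫ x in D, ‖eps x - eps xc‖ ^ 2 * ‖Psi xc α x‖ ^ 2)
      atTop (𝓝 0) := by
  obtain ⟨C, s, hs, -, hHol⟩ := hHolder
  set K := 2 / 3 * π ^ (-(3 / 2 : ℝ)) * C ^ 2 *
    ∫ x : EuclideanSpace ℝ (Fin 3), ‖x‖ ^ (2 * (s : ℝ) + 2) * exp (-‖x‖ ^ 2)
  have hbound : ∀ α > 0,
      ∫ x in D, ‖eps x - eps xc‖ ^ 2 * ‖Psi xc α x‖ ^ 2 ≤ K * α ^ (-(s : ℝ)) := by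
    intro α hα
    have hdecay := hHol.setIntegral_norm_sub_sq_mul_gaussian_le volume hα D xc
    have hintegrand : ∀ x, ‖eps x - eps xc‖ ^ 2 * ‖Psi xc α x‖ ^ 2 =
        2 / 3 * π ^ (-(3 / 2 : ℝ)) * α ^ (5 / 2 : ℝ) *
          (‖eps x - eps xc‖ ^ 2 * (‖x - xc‖ ^ 2 * exp (-α * ‖x - xc‖ ^ 2))) := fun x => by
      rw [norm_Psi_sq hα.le]; ring
    simp only [hintegrand]
    rw [integral_const_mul]
    calc _ ≤ 2 / 3 * π ^ (-(3 / 2 : ℝ)) * α ^ (5 / 2 : ℝ) * (C ^ 2 *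
          α ^ (-(2 * s + 2 + 3) / 2 : ℝ) *
          ∫ x : EuclideanSpace ℝ (Fin 3), ‖x‖ ^ (2 * (s : ℝ) + 2) * exp (-‖x‖ ^ 2)) := by
          gcongr
          simpa [finrank_euclideanSpace_fin] using hdecay
      _ = K * (α ^ (5 / 2 : ℝ) * α ^ (-(2 * s + 2 + 3) / 2 : ℝ)) := by ring
      _ = K * α ^ (-(s : ℝ)) := by rw [← rpow_add hα]; ring_nf
  refine squeeze_zero' (Eventually.of_forall fun α => integral_nonneg fun x => by positivity)
    ((eventually_gt_atTop 0).mono hbound) ?_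
  simpa using (tendsto_rpow_neg_atTop hs).const_mul K

theorem essential_spectrum_first_term_vanishes
    (eps : EuclideanSpace ℝ (Fin 3) → ℂ)
    (hHolder : ∃ (C s : NNReal), 0 < s ∧ s ≤ 1 ∧ HolderWith C s eps)
    (hbdd : ∃ M : ℝ, ∀ x, ‖eps x‖ ≤ M)
    (D : Set (EuclideanSpace ℝ (Fin 3))) (hD : Bornology.IsBounded D)
    (hDm : MeasurableSet D)
    (xc : EuclideanSpace ℝ (Fin 3)) (hxc : xc ∈ interior D) :
    Tendsto (fun α : ℝ =>
        ∫ x in D, ‖eps x - eps xc‖ ^ 2 * ‖Psi xc α x‖ ^ 2)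
      atTop (𝓝 0) :=
  essential_spectrum_first_term_vanishes_general eps hHolder D xc
end
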